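/- arXiv:2501.02761 — 3 statements merged into one kernel-verified Lean document; each statement's English description precedes it below -/
import Mathlib

section
/- Consider a standard-form LP min ⟨c, x⟩ subject to Ax = b, x ≥ 0, with unique optimal solution x* having basic/non-basic partition (B, N), where x*_N = 0, A_B is invertible, and the dual slack satisfies s*_B = 0 and s*_N > 0 componentwise. Then there exists μ > 0 (explicitly μ = σ_min(A_B)·min_j (s*_N)_j / (‖A_N‖ + σ_min(A_B))) such that for every feasible x (i.e., Ax = b, x ≥ 0), ⟨c, x⟩ - ⟨c, x*⟩ ≥ μ ‖x - x*‖. -/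
/-!
Write `N` for the non-basic indices. Since `c = Aᵀ y* + s` and `A (x - x*) = 0`, the optimality
gap is `⟨s, x - x*⟩ = ∑_{j ∈ N} s_j x_j ≥ σ ∑_{j ∈ N} x_j`, where `σ = min_{j ∈ N} s_j > 0`.
Because `A_B` is invertible, a vector of `ker A` vanishing on `N` is zero, so on the
finite-dimensional space `ker A` the restriction `d ↦ d_N` is injective and hence bounded below:
`‖d‖ ≤ C ‖d_N‖_∞ ≤ C ∑_{j ∈ N} x_j` for `d = x - x*`. Thus `μ = σ / C` works.
-/

open Matrix

theorem Submodule.exists_norm_le_mul_norm_of_disjoint_ker {𝕜 E F : Type*}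
    [NontriviallyNormedField 𝕜] [CompleteSpace 𝕜] [NormedAddCommGroup E] [NormedSpace 𝕜 E]
    [FiniteDimensional 𝕜 E] [NormedAddCommGroup F] [NormedSpace 𝕜 F]
    (V : Submodule 𝕜 E) (f : E →ₗ[𝕜] F) (h : Disjoint V (LinearMap.ker f)) :
    ∃ C > 0, ∀ v ∈ V, ‖v‖ ≤ C * ‖f v‖ := by
  have hker : LinearMap.ker (f ∘ₗ V.subtype) = ⊥ := by
    rw [LinearMap.ker_eq_bot']
    exact fun v hv => Subtype.ext (Submodule.disjoint_def.1 h v v.2 hv)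
  obtain ⟨K, hK, hanti⟩ := (f ∘ₗ V.subtype).exists_antilipschitzWith hker
  exact ⟨K, hK, fun v hv => hanti.le_mul_norm (map_zero _) ⟨v, hv⟩⟩

theorem exists_pos_forall_le_of_forall_pos {ι : Type*} [Finite ι] (f : ι → ℝ)
    (hf : ∀ i, 0 < f i) : ∃ σ > 0, ∀ i, σ ≤ f i := by
  cases isEmpty_or_nonempty ι
  · exact ⟨1, one_pos, isEmptyElim⟩
  · obtain ⟨i₀, hi₀⟩ := Finite.exists_min f
    exact ⟨f i₀, hf i₀, hi₀⟩

theorem pi_norm_le_sum_of_nonneg {ι : Type*} [Fintype ι] {f : ι → ℝ} (hf : ∀ i, 0 ≤ f i) :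
    ‖f‖ ≤ ∑ i, f i :=
  (pi_norm_le_iff_of_nonneg (Finset.sum_nonneg fun i _ => hf i)).2 fun i => by
    rw [Real.norm_of_nonneg (hf i)]
    exact Finset.single_le_sum (fun j _ => hf j) (Finset.mem_univ i)

namespace Matrix

variable {ι κ ι' R : Type*} [Fintype κ] [Fintype ι']

theorem mulVec_eq_submatrix_mulVec [NonUnitalNonAssocSemiring R] (A : Matrix ι κ R)
    {basis : ι' → κ} (hbasis : Function.Injective basis) {d : κ → R}
    (hd : ∀ j, j ∉ Set.range basis → d j = 0) :
    A *ᵥ d = A.submatrix id basis *ᵥ (d ∘ basis) := by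
  funext i
  exact (Fintype.sum_of_injective basis hbasis _ _ (fun j hj => by rw [hd j hj, mul_zero])
    fun _ => rfl).symm

theorem eq_zero_of_mulVec_eq_zero_of_isUnit_submatrix [Field R] [DecidableEq ι']
    {A : Matrix ι' κ R} {basis : ι' → κ} (hbasis : Function.Injective basis)
    (hAB : IsUnit (A.submatrix id basis)) {d : κ → R} (hAd : A *ᵥ d = 0)
    (hd : ∀ j, j ∉ Set.range basis → d j = 0) : d = 0 := by
  have hdB : d ∘ basis = 0 := mulVec_injective_iff_isUnit.2 hAB <| by
    rw [← A.mulVec_eq_submatrix_mulVec hbasis hd, hAd, mulVec_zero]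
  funext j
  by_cases hj : j ∈ Set.range basis
  · obtain ⟨k, rfl⟩ := hj
    exact congrFun hdB k
  · exact hd j hj

theorem dotProduct_transpose_mulVec_add_of_mulVec_eq_zero [CommSemiring R] [Fintype ι]
    (A : Matrix ι κ R) (y : ι → R) (s d : κ → R) (hd : A *ᵥ d = 0) :
    (Aᵀ *ᵥ y + s) ⬝ᵥ d = s ⬝ᵥ d := by
  rw [add_dotProduct, mulVec_transpose, ← dotProduct_mulVec, hd, dotProduct_zero, zero_add]

theorem exists_norm_le_mul_norm_of_mulVec_eq_zero [DecidableEq κ] [DecidableEq ι']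
    {A : Matrix ι' κ ℝ} {basis : ι' → κ} (hbasis : Function.Injective basis)
    (hAB : IsUnit (A.submatrix id basis)) :
    ∃ C > 0, ∀ d : EuclideanSpace ℝ κ, A *ᵥ d = 0 →
      ‖d‖ ≤ C * ‖fun j : {j // j ∉ Set.range basis} => d j‖ := by
  let P : EuclideanSpace ℝ κ →ₗ[ℝ] {j // j ∉ Set.range basis} → ℝ :=
    LinearMap.pi fun j => EuclideanSpace.projₗ (j : κ)
  have hkerA : ∀ d, d ∈ LinearMap.ker (toLpLin 2 2 A) ↔ A *ᵥ d = 0 := fun d => by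
    simp [toLpLin_apply]
  have hdisj : Disjoint (LinearMap.ker (toLpLin 2 2 A)) (LinearMap.ker P) := by
    refine Submodule.disjoint_def.2 fun d hA hP => WithLp.ofLp_injective 2 ?_
    exact eq_zero_of_mulVec_eq_zero_of_isUnit_submatrix hbasis hAB ((hkerA d).1 hA)
      fun j hj => congrFun hP ⟨j, hj⟩
  obtain ⟨C, hC, hCbound⟩ := Submodule.exists_norm_le_mul_norm_of_disjoint_ker _ P hdisj
  exact ⟨C, hC, fun d hd => hCbound d ((hkerA d).2 hd)⟩

end Matrix

theorem dotProduct_eq_sum_compl_range {ι' κ R : Type*} [Fintype κ] [CommSemiring R]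
    {basis : ι' → κ} [DecidablePred (· ∈ Set.range basis)] {s : κ → R}
    (hs : ∀ k, s (basis k) = 0) (d : κ → R) :
    s ⬝ᵥ d = ∑ j : {j // j ∉ Set.range basis}, s j * d j := by
  rw [dotProduct, ← Fintype.sum_subtype_add_sum_subtype (· ∈ Set.range basis),
    Finset.sum_eq_zero fun ⟨_, k, rfl⟩ _ => by rw [hs k, zero_mul], zero_add]

theorem lp_sharp_error_bound_general
    {m n : ℕ}
    (A : Matrix (Fin m) (Fin n) ℝ) (b : Fin m → ℝ) (c : EuclideanSpace ℝ (Fin n))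
    (xstar : EuclideanSpace ℝ (Fin n))
    (hfeas : A.mulVec xstar = b ∧ ∀ j, 0 ≤ xstar j)
    (basis : Fin m → Fin n) (hbasis : Function.Injective basis)
    (hAB : IsUnit (Matrix.of fun i k => A i (basis k) : Matrix (Fin m) (Fin m) ℝ))
    (hxN : ∀ j, j ∉ Set.range basis → xstar j = 0)
    (ystar : Fin m → ℝ) (s : Fin n → ℝ)
    (hdual : ∀ j, c j = Aᵀ.mulVec ystar j + s j)
    (hsB : ∀ k, s (basis k) = 0)
    (hsN : ∀ j, j ∉ Set.range basis → 0 < s j) :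
    ∃ μ > 0, ∀ x : EuclideanSpace ℝ (Fin n),
      A.mulVec x = b → (∀ j, 0 ≤ x j) →
      μ * ‖x - xstar‖ ≤ c ⬝ᵥ x - c ⬝ᵥ xstar := by
  classical
  let N := {j // j ∉ Set.range basis}
  obtain ⟨C, hC, hCbound⟩ := exists_norm_le_mul_norm_of_mulVec_eq_zero hbasis hAB
  obtain ⟨σ, hσ, hσs⟩ :=
    exists_pos_forall_le_of_forall_pos (fun j : N => s j) fun j => hsN j j.2
  have hc : (c : Fin n → ℝ) = Aᵀ *ᵥ ystar + s := funext hdual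
  refine ⟨σ / C, div_pos hσ hC, fun x hAx hx => ?_⟩
  have hAd : A *ᵥ (x - xstar).ofLp = 0 := by
    rw [WithLp.ofLp_sub, mulVec_sub, hAx, hfeas.1, sub_self]
  have hdN : ∀ j : N, (x - xstar) j = x j := fun j => by simp [hxN j j.2]
  calc σ / C * ‖x - xstar‖ ≤ σ * ‖fun j : N => x j‖ := by
        rw [div_mul_eq_mul_div, div_le_iff₀ hC, mul_right_comm, mul_assoc, ← funext hdN]
        exact mul_le_mul_of_nonneg_left (hCbound _ hAd) hσ.le
    _ ≤ σ * ∑ j : N, x j := by grw [pi_norm_le_sum_of_nonneg fun j : N => hx j]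
    _ ≤ ∑ j : N, s j * (x - xstar) j := by
        rw [Finset.mul_sum]
        exact Finset.sum_le_sum fun j _ => by
          rw [hdN]; exact mul_le_mul_of_nonneg_right (hσs j) (hx j)
    _ = c ⬝ᵥ x - c ⬝ᵥ xstar := by
        rw [← dotProduct_eq_sum_compl_range hsB,
          ← dotProduct_transpose_mulVec_add_of_mulVec_eq_zero A ystar s _ hAd, ← hc,
          WithLp.ofLp_sub, dotProduct_sub]

/-- Error bound for a non-degenerate standard-form LP: if `x*` is the unique optimal
solution with basis `B` (given by an injective `basis : Fin m → Fin n` selecting the basic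
columns), `A_B` invertible, `x*` vanishing outside the basis, and the dual slack `s`
satisfies `s = 0` on basic indices and `s > 0` on non-basic indices (with
`c = Aᵀ y* + s` for a dual optimal `y*`), then there exists `μ > 0` such that
`⟨c, x⟩ - ⟨c, x*⟩ ≥ μ ‖x - x*‖` for every feasible `x`. -/
theorem lp_sharp_error_bound
    {m n : ℕ}
    (A : Matrix (Fin m) (Fin n) ℝ) (b : Fin m → ℝ) (c : EuclideanSpace ℝ (Fin n))
    (xstar : EuclideanSpace ℝ (Fin n))
    (hfeas : A.mulVec xstar = b ∧ ∀ j, 0 ≤ xstar j)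
    (hopt : ∀ x : EuclideanSpace ℝ (Fin n),
      A.mulVec x = b → (∀ j, 0 ≤ x j) → c ⬝ᵥ xstar ≤ c ⬝ᵥ x)
    (huniq : ∀ x : EuclideanSpace ℝ (Fin n),
      A.mulVec x = b → (∀ j, 0 ≤ x j) → c ⬝ᵥ x = c ⬝ᵥ xstar → x = xstar)
    (basis : Fin m → Fin n) (hbasis : Function.Injective basis)
    (hAB : IsUnit (Matrix.of fun i k => A i (basis k) : Matrix (Fin m) (Fin m) ℝ))
    (hxN : ∀ j, j ∉ Set.range basis → xstar j = 0)
    (ystar : Fin m → ℝ) (s : Fin n → ℝ)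
    (hdual : ∀ j, c j = Aᵀ.mulVec ystar j + s j)
    (hsB : ∀ k, s (basis k) = 0)
    (hsN : ∀ j, j ∉ Set.range basis → 0 < s j) :
    ∃ μ > 0, ∀ x : EuclideanSpace ℝ (Fin n),
      A.mulVec x = b → (∀ j, 0 ≤ x j) →
      μ * ‖x - xstar‖ ≤ c ⬝ᵥ x - c ⬝ᵥ xstar :=
  lp_sharp_error_bound_general A b c xstar hfeas basis hbasis hAB hxN ystar s hdual hsB hsN
end

section
/- Let x be feasible for the standard-form LP (Ax = b, x ≥ 0) with unique optimal x*, optimal basis partition (B, N), x*_N = 0, A_B invertible, dual slack s*_N > 0. Then ‖x_N‖ ≤ (⟨c, x⟩ - ⟨c, x*⟩) / min_j (s*_N)_j. -/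
open Matrix

/-- For a non-degenerate standard-form LP with unique optimal `x*`, basis `basis`,
`x*_N = 0`, `A_B` invertible and dual slack positive on non-basic indices, every feasible
`x` satisfies `‖x_N‖ ≤ (⟨c, x⟩ - ⟨c, x*⟩) / min_{j ∈ N} s_j`, where `x_N` is the
non-basic part of `x`. -/
theorem lp_nonbasic_norm_bound
    {m n : ℕ}
    (A : Matrix (Fin m) (Fin n) ℝ) (b : Fin m → ℝ) (c : EuclideanSpace ℝ (Fin n))
    (xstar x : EuclideanSpace ℝ (Fin n))
    (hfeas : A.mulVec xstar = b ∧ ∀ j, 0 ≤ xstar j)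
    (hopt : ∀ z : EuclideanSpace ℝ (Fin n),
      A.mulVec z = b → (∀ j, 0 ≤ z j) → c ⬝ᵥ xstar ≤ c ⬝ᵥ z)
    (huniq : ∀ z : EuclideanSpace ℝ (Fin n),
      A.mulVec z = b → (∀ j, 0 ≤ z j) → c ⬝ᵥ z = c ⬝ᵥ xstar → z = xstar)
    (basis : Fin m → Fin n) (hbasis : Function.Injective basis)
    (hAB : IsUnit (Matrix.of fun i k => A i (basis k) : Matrix (Fin m) (Fin m) ℝ))
    (hxN : ∀ j, j ∉ Set.range basis → xstar j = 0)
    (ystar : Fin m → ℝ) (s : Fin n → ℝ)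
    (hdual : ∀ j, c j = Aᵀ.mulVec ystar j + s j)
    (hsB : ∀ k, s (basis k) = 0)
    (hsN : ∀ j, j ∉ Set.range basis → 0 < s j)
    (hx : A.mulVec x = b) (hxpos : ∀ j, 0 ≤ x j)
    (N : Finset (Fin n)) (hN : N = Finset.univ.filter (fun j => j ∉ Set.range basis))
    (hNne : N.Nonempty) :
    Real.sqrt (∑ j ∈ N, (x j) ^ 2)
      ≤ (c ⬝ᵥ x - c ⬝ᵥ xstar) / (N.inf' hNne s) := by

  -- basic facts
  have hmem : ∀ j ∈ N, j ∉ Set.range basis := by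
    intro j hj; rw [hN] at hj; exact (Finset.mem_filter.mp hj).2
  have hsmin : 0 < N.inf' hNne s := by
    obtain ⟨j0, hj0, hj0e⟩ := Finset.exists_mem_eq_inf' hNne s
    rw [hj0e]; exact hsN j0 (hmem j0 hj0)
  -- cost identity
  have hc : ∀ z : EuclideanSpace ℝ (Fin n), A.mulVec z = b →
      c ⬝ᵥ z = ystar ⬝ᵥ b + s ⬝ᵥ z := by
    intro z hz
    have hce : (c : Fin n → ℝ) = Aᵀ.mulVec ystar + s := funext hdual
    rw [show c ⬝ᵥ z = (Aᵀ.mulVec ystar + s) ⬝ᵥ z by rw [← hce],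
      add_dotProduct, Matrix.mulVec_transpose, ← Matrix.dotProduct_mulVec, hz]
  have hsx0 : s ⬝ᵥ (xstar : Fin n → ℝ) = 0 := by
    apply Finset.sum_eq_zero
    intro j _
    by_cases hj : j ∈ Set.range basis
    · obtain ⟨k, rfl⟩ := hj; rw [hsB k, zero_mul]
    · rw [hxN j hj, mul_zero]
  have hdiff : c ⬝ᵥ x - c ⬝ᵥ xstar = ∑ j ∈ N, s j * x j := by
    rw [hc x hx, hc xstar hfeas.1, hsx0]
    have : s ⬝ᵥ (x : Fin n → ℝ) = ∑ j ∈ N, s j * x j := by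
      refine (Finset.sum_subset N.subset_univ ?_).symm
      intro j _ hj
      have hjr : j ∈ Set.range basis := by
        by_contra hjr
        exact hj (by rw [hN]; exact Finset.mem_filter.mpr ⟨Finset.mem_univ j, hjr⟩)
      obtain ⟨k, rfl⟩ := hjr
      rw [hsB k, zero_mul]
    simp [dotProduct] at this ⊢
    linarith [this]
  -- sqrt bound
  have hsum_nonneg : (0:ℝ) ≤ ∑ j ∈ N, x j :=
    Finset.sum_nonneg fun j _ => hxpos j
  have h1 : Real.sqrt (∑ j ∈ N, (x j) ^ 2) ≤ ∑ j ∈ N, x j := by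
    have := Finset.sum_sq_le_sq_sum_of_nonneg (s := N) (f := fun j => x j)
      (fun j _ => hxpos j)
    calc Real.sqrt (∑ j ∈ N, (x j) ^ 2) ≤ Real.sqrt ((∑ j ∈ N, x j) ^ 2) :=
          Real.sqrt_le_sqrt this
      _ = ∑ j ∈ N, x j := by rw [Real.sqrt_sq hsum_nonneg]
  have h2 : (N.inf' hNne s) * (∑ j ∈ N, x j) ≤ ∑ j ∈ N, s j * x j := by
    rw [Finset.mul_sum]
    refine Finset.sum_le_sum fun j hj => ?_
    exact mul_le_mul_of_nonneg_right (Finset.inf'_le s hj) (hxpos j)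
  rw [le_div_iff₀ hsmin, hdiff]
  calc Real.sqrt (∑ j ∈ N, (x j) ^ 2) * (N.inf' hNne s)
      ≤ (∑ j ∈ N, x j) * (N.inf' hNne s) :=
        mul_le_mul_of_nonneg_right h1 hsmin.le
    _ = (N.inf' hNne s) * (∑ j ∈ N, x j) := mul_comm _ _
    _ ≤ ∑ j ∈ N, s j * x j := h2
end

section
/- Let α, T_p, Δ, diam ≥ 0 with T_p > 0 and γ ≥ 1. The function φ(λ, β) = max{βγ - β, 1 - λ, λ - β, (-2β + λ - 1)/γ + λ, λ - λ/γ} over (λ, β) ≥ 0 attains its minimum value (γ-1)/(2γ-1) at λ* = γ/(2γ-1), β* = 1/(2γ-1). -/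
/-! At the optimum the three exponents `βγ - β`, `1 - λ`, `λ - β` (and also `λ - λ/γ`) are
balanced, while the fourth one stays below them. Conversely, the combination
`1·(βγ - β) + (γ - 1)(1 - λ) + (γ - 1)(λ - β) = γ - 1` has nonnegative weights summing to
`2γ - 1`, so the largest of those three exponents is at least `(γ - 1)/(2γ - 1)` everywhere. -/

section ExponentTradeoff

variable {γ : ℝ}

lemma le_max_three_exponents (hγ : 1 ≤ γ) (lam β : ℝ) :
    (γ - 1) / (2 * γ - 1) ≤ max (β * γ - β) (max (1 - lam) (lam - β)) := by
  rw [div_le_iff₀ (by linarith)]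
  have h₁ : β * γ - β ≤ max (β * γ - β) (max (1 - lam) (lam - β)) := le_max_left _ _
  have h₂ : 1 - lam ≤ max (β * γ - β) (max (1 - lam) (lam - β)) :=
    (le_max_left _ _).trans (le_max_right _ _)
  have h₃ : lam - β ≤ max (β * γ - β) (max (1 - lam) (lam - β)) :=
    (le_max_right _ _).trans (le_max_right _ _)
  nlinarith

lemma balanced_exponents (hγ : 1 ≤ γ) :
    1 / (2 * γ - 1) * γ - 1 / (2 * γ - 1) = (γ - 1) / (2 * γ - 1) ∧
    1 - γ / (2 * γ - 1) = (γ - 1) / (2 * γ - 1) ∧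
    γ / (2 * γ - 1) - 1 / (2 * γ - 1) = (γ - 1) / (2 * γ - 1) ∧
    γ / (2 * γ - 1) - γ / (2 * γ - 1) / γ = (γ - 1) / (2 * γ - 1) := by
  -- `field_simp` rewrites `2 * γ` as `γ * 2` before discharging side conditions
  have hD : γ * 2 - 1 ≠ 0 := by linarith
  have hγ₀ : γ ≠ 0 := by linarith
  exact ⟨by field_simp, by field_simp; ring, by field_simp, by field_simp⟩

lemma fourth_exponent_le (hγ : 1 ≤ γ) :
    (-2 * (1 / (2 * γ - 1)) + γ / (2 * γ - 1) - 1) / γ + γ / (2 * γ - 1) ≤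
      (γ - 1) / (2 * γ - 1) := by
  have hD : γ * 2 - 1 ≠ 0 := by linarith
  have hγ₀ : γ ≠ 0 := by linarith
  have gap : (γ - 1) / (2 * γ - 1) -
      ((-2 * (1 / (2 * γ - 1)) + γ / (2 * γ - 1) - 1) / γ + γ / (2 * γ - 1)) =
      1 / (γ * (2 * γ - 1)) := by
    field_simp
    ring
  have gap_pos : 0 < 1 / (γ * (2 * γ - 1)) := by
    have : 0 < 2 * γ - 1 := by linarith
    positivity
  linarith

end ExponentTradeoff

/-- Exponent trade-off optimization for the regret bound: for `γ ≥ 1`, the function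
`φ(λ, β) = max{βγ - β, 1 - λ, λ - β, (-2β + λ - 1)/γ + λ, λ - λ/γ}` over
`(λ, β) ≥ 0` attains its minimum value `(γ-1)/(2γ-1)` at
`λ* = γ/(2γ-1)`, `β* = 1/(2γ-1)`. -/
theorem exponent_tradeoff_optimum
    (γ : ℝ) (hγ : 1 ≤ γ)
    (φ : ℝ → ℝ → ℝ)
    (hφ : ∀ lam β, φ lam β =
      max (β * γ - β) (max (1 - lam) (max (lam - β)
        (max ((-2 * β + lam - 1) / γ + lam) (lam - lam / γ))))) :
    φ (γ / (2 * γ - 1)) (1 / (2 * γ - 1)) = (γ - 1) / (2 * γ - 1) ∧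
    ∀ lam β : ℝ, 0 ≤ lam → 0 ≤ β → (γ - 1) / (2 * γ - 1) ≤ φ lam β := by
  refine ⟨?_, fun lam β _ _ => ?_⟩
  · obtain ⟨e₁, e₂, e₃, e₅⟩ := balanced_exponents hγ
    rw [hφ, e₁, e₂, e₃, e₅, max_eq_right (fourth_exponent_le hγ), max_self, max_self, max_self]
  · calc (γ - 1) / (2 * γ - 1) ≤ max (β * γ - β) (max (1 - lam) (lam - β)) :=
          le_max_three_exponents hγ lam β
      _ ≤ φ lam β := by
          rw [hφ]
          exact max_le_max le_rfl (max_le_max le_rfl (le_max_left _ _))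
end
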